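/- Let I be a summable ideal given by a weight μ with Σ_{i∈ω} μ(i) = ∞ and μ(i) ≤ 1 for all i, and let f : ω → ω be any function. Then for every A ⊆ ω with Σ_{i∈A} μ(i) = ∞ and every m ∈ ω, there exists a sequence of finite sets ⟨tᵢ : i > m⟩ with tᵢ ⊆ A \ f(i), max(tᵢ) < min(tᵢ₊₁), and 2^i ≤ Σ_{j∈tᵢ} μ(j) < 2^{i+1} + 1, so that B = ⋃_{i>m} tᵢ satisfies Σ_{j∈B} μ(j) = ∞. -/

import Mathlib

/-!
Since every weight is at most `1`, the partial sums of `μ` along a set of infinite mass climb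
through every level `c` in steps of at most `1`; stopping at the first partial sum `≥ c` gives a
finite block of mass in `[c, c + 1)`. Removing an initial segment does not change infinite mass,
so such blocks can be chosen beyond `f i` and beyond the previous block, with `c = 2 ^ i`.
The union contains blocks of arbitrarily large mass `≥ 2 ^ i`, so it has infinite mass.
-/

open scoped ENNReal

/-- The mass of a set of integers under a weight function. -/
noncomputable def mass (μ : ℕ → ℝ≥0∞) (X : Set ℕ) : ℝ≥0∞ := ∑' i : X, μ i

open Filter

section Mass

variable (μ : ℕ → ℝ≥0∞)

lemma mass_mono {X Y : Set ℕ} (h : X ⊆ Y) : mass μ X ≤ mass μ Y :=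
  ENNReal.tsum_mono_subtype μ h

lemma mass_coe_finset (s : Finset ℕ) : mass μ (s : Set ℕ) = ∑ j ∈ s, μ j :=
  Finset.tsum_subtype' s μ

lemma mass_union_le (X Y : Set ℕ) : mass μ (X ∪ Y) ≤ mass μ X + mass μ Y :=
  ENNReal.tsum_union_le μ X Y

lemma mass_eq_iSup_sum_range_indicator (X : Set ℕ) :
    mass μ X = ⨆ n, ∑ j ∈ Finset.range n, X.indicator μ j := by
  rw [mass, tsum_subtype, ENNReal.tsum_eq_iSup_nat]

end Mass

lemma mass_inter_Ici_eq_top {μ : ℕ → ℝ≥0∞} (hμ : ∀ j, μ j ≠ ⊤) {A : Set ℕ}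
    (hA : mass μ A = ⊤) (N : ℕ) : mass μ (A ∩ Set.Ici N) = ⊤ := by
  have hhead : mass μ (Finset.range N : Set ℕ) ≠ ⊤ := by
    rw [mass_coe_finset]
    exact ENNReal.sum_ne_top.2 fun j _ => hμ j
  have hcover : A ⊆ (A ∩ Set.Ici N) ∪ (Finset.range N : Set ℕ) := by
    intro j hj
    by_cases hjN : N ≤ j
    · exact Or.inl ⟨hj, hjN⟩
    · exact Or.inr (by simpa using hjN)
  have := (mass_mono μ hcover).trans (mass_union_le μ _ _)
  rw [hA, top_le_iff, ENNReal.add_eq_top] at this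
  exact this.resolve_right hhead

lemma ENNReal.exists_le_lt_add_one_of_succ_le_add_one {S : ℕ → ℝ≥0∞} (h0 : S 0 = 0)
    (hstep : ∀ n, S (n + 1) ≤ S n + 1) {c : ℝ≥0∞} (hreach : ∃ n, c ≤ S n) :
    ∃ n, c ≤ S n ∧ S n < c + 1 := by
  classical
  refine ⟨Nat.find hreach, Nat.find_spec hreach, ?_⟩
  rcases hfind : Nat.find hreach with _ | k
  · simp [h0]
  · have hk : S k < c := not_le.1 (Nat.find_min hreach (hfind ▸ k.lt_succ_self))
    calc S (k + 1) ≤ S k + 1 := hstep k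
      _ < c + 1 := ENNReal.add_lt_add_right ENNReal.one_ne_top hk

lemma exists_finset_subset_le_sum_lt_add_one {μ : ℕ → ℝ≥0∞} (hμ1 : ∀ j, μ j ≤ 1)
    {X : Set ℕ} (hX : mass μ X = ⊤) {c : ℝ≥0∞} (hc : c ≠ ⊤) :
    ∃ t : Finset ℕ, (t : Set ℕ) ⊆ X ∧ c ≤ ∑ j ∈ t, μ j ∧ ∑ j ∈ t, μ j < c + 1 := by
  classical
  set S : ℕ → ℝ≥0∞ := fun n => ∑ j ∈ Finset.range n, X.indicator μ j
  have hstep (n : ℕ) : S (n + 1) ≤ S n + 1 := by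
    simp only [S, Finset.sum_range_succ]
    gcongr
    exact (Set.indicator_le_self X μ n).trans (hμ1 n)
  have hreach : ∃ n, c ≤ S n := by
    have : c < ⨆ n, S n := by
      rwa [← mass_eq_iSup_sum_range_indicator, hX, lt_top_iff_ne_top]
    obtain ⟨n, hn⟩ := lt_iSup_iff.1 this
    exact ⟨n, hn.le⟩
  obtain ⟨n, hcn, hnc⟩ :=
    ENNReal.exists_le_lt_add_one_of_succ_le_add_one (by simp [S]) hstep hreach
  have hsum : ∑ j ∈ (Finset.range n).filter (· ∈ X), μ j = S n := by
    rw [Finset.sum_filter]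
    rfl
  refine ⟨(Finset.range n).filter (· ∈ X), ?_, hsum ▸ hcn, hsum ▸ hnc⟩
  intro j hj
  exact (Finset.mem_filter.1 hj).2

lemma exists_consecutive_finsets {P : ℕ → Finset ℕ → Prop} (f : ℕ → ℕ)
    (h : ∀ N i, ∃ s : Finset ℕ, (∀ j ∈ s, N ≤ j) ∧ P i s) :
    ∃ t : ℕ → Finset ℕ, (∀ i, P i (t i) ∧ ∀ j ∈ t i, f i ≤ j) ∧
      ∀ i, ∀ j ∈ t i, ∀ k ∈ t (i + 1), j < k := by
  choose T hTge hTP using h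
  let t : ℕ → Finset ℕ := fun i =>
    Nat.rec (T (f 0) 0) (fun i s => T (max (f (i + 1)) (s.sup id + 1)) (i + 1)) i
  have ht : ∀ i, ∃ N, f i ≤ N ∧ t i = T N i
    | 0 => ⟨f 0, le_rfl, rfl⟩
    | i + 1 => ⟨_, le_max_left _ _, rfl⟩
  refine ⟨t, fun i => ?_, fun i j hj k hk => ?_⟩
  · obtain ⟨N, hfN, hN⟩ := ht i
    rw [hN]
    exact ⟨hTP N i, fun j hj => hfN.trans (hTge N i j hj)⟩
  · have hjk : (t i).sup id + 1 ≤ k := (le_max_right _ _).trans (hTge _ _ k hk)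
    have hj : j ≤ (t i).sup id := Finset.le_sup (f := id) hj
    omega

lemma ENNReal.eq_top_of_forall_pow_le {r x : ℝ≥0∞} (hr : 1 < r) (m : ℕ)
    (h : ∀ i, m < i → r ^ i ≤ x) : x = ⊤ :=
  top_le_iff.1 <| le_of_tendsto (ENNReal.tendsto_pow_atTop_nhds_top_iff.2 hr)
    (eventually_gt_atTop m |>.mono h)

theorem stmt7_general (μ : ℕ → ℝ≥0∞) (hμ1 : ∀ i, μ i ≤ 1)
    (f : ℕ → ℕ)
    (A : Set ℕ) (hA : mass μ A = ⊤) (m : ℕ) :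
    ∃ t : ℕ → Finset ℕ,
      (∀ i, m < i → (↑(t i) : Set ℕ) ⊆ A ∧ (∀ j ∈ t i, f i ≤ j) ∧
        (2 : ℝ≥0∞) ^ i ≤ ∑ j ∈ t i, μ j ∧ ∑ j ∈ t i, μ j < 2 ^ (i + 1) + 1) ∧
      (∀ i, m < i → ∀ j ∈ t i, ∀ k ∈ t (i + 1), j < k) ∧
      mass μ (⋃ i ∈ {i : ℕ | m < i}, (↑(t i) : Set ℕ)) = ⊤ := by
  have hμ : ∀ j, μ j ≠ ⊤ := fun j => ((hμ1 j).trans_lt ENNReal.one_lt_top).ne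
  have hblock : ∀ N i, ∃ s : Finset ℕ, (∀ j ∈ s, N ≤ j) ∧ (s : Set ℕ) ⊆ A ∧
      (2 : ℝ≥0∞) ^ i ≤ ∑ j ∈ s, μ j ∧ ∑ j ∈ s, μ j < 2 ^ i + 1 := fun N i => by
    obtain ⟨s, hsA, hlow, hupp⟩ := exists_finset_subset_le_sum_lt_add_one hμ1
      (mass_inter_Ici_eq_top hμ hA N) (ENNReal.pow_ne_top (a := 2) ENNReal.ofNat_ne_top)
    exact ⟨s, fun j hj => (hsA hj).2, fun j hj => (hsA hj).1, hlow, hupp⟩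
  obtain ⟨t, ht, hsep⟩ := exists_consecutive_finsets f hblock
  refine ⟨t, fun i _ => ⟨(ht i).1.1, (ht i).2, (ht i).1.2.1,
    (ht i).1.2.2.trans_le (by gcongr <;> norm_num)⟩, fun i _ => hsep i, ?_⟩
  refine ENNReal.eq_top_of_forall_pow_le ENNReal.one_lt_two m fun i hi => ?_
  calc (2 : ℝ≥0∞) ^ i ≤ ∑ j ∈ t i, μ j := (ht i).1.2.1
    _ = mass μ (t i : Set ℕ) := (mass_coe_finset μ _).symm
    _ ≤ _ := mass_mono μ (Set.subset_biUnion_of_mem (u := fun i => (t i : Set ℕ)) hi)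

/-- Key combinatorial step for summable ideals: from an `I`-positive set `A`
one can extract consecutive finite blocks `tᵢ ⊆ A \ f(i)` of mass between
`2^i` and `2^{i+1} + 1`, whose union `B` is again `I`-positive. -/
theorem stmt7 (μ : ℕ → ℝ≥0∞) (hμ1 : ∀ i, μ i ≤ 1)
    (hμdiv : mass μ Set.univ = ⊤) (f : ℕ → ℕ)
    (A : Set ℕ) (hA : mass μ A = ⊤) (m : ℕ) :
    ∃ t : ℕ → Finset ℕ,
      (∀ i, m < i → (↑(t i) : Set ℕ) ⊆ A ∧ (∀ j ∈ t i, f i ≤ j) ∧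
        (2 : ℝ≥0∞) ^ i ≤ ∑ j ∈ t i, μ j ∧ ∑ j ∈ t i, μ j < 2 ^ (i + 1) + 1) ∧
      (∀ i, m < i → ∀ j ∈ t i, ∀ k ∈ t (i + 1), j < k) ∧
      mass μ (⋃ i ∈ {i : ℕ | m < i}, (↑(t i) : Set ℕ)) = ⊤ :=
  stmt7_general μ hμ1 f A hA m
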